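/- For all integers q ≥ 2 and n ≥ 1, and under each of the scenarios (∗•) and (••), the whole set F_q is n-cell implementable if and only if q ≤ 2n. -/

import Mathlib

/-- The alphabet 𝔹• = {0, 1, ∗, •}. -/
inductive BB : Type
  | zero
  | one
  | star
  | reject
deriving DecidableEq

instance instFintypeBB : Fintype BB where
  elems := {BB.zero, BB.one, BB.star, BB.reject}
  complete := by intro x; cases x <;> simp

/-- The cell function T : 𝔹• × 𝔹• → 𝔹: T(u,ϑ) = 1 iff u = ∗, or ϑ = ∗,
or u,ϑ ∈ 𝔹 with u = ϑ. -/
def Tcell : BB → BB → Bool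
  | BB.star, _ => true
  | _, BB.star => true
  | BB.zero, BB.zero => true
  | BB.one, BB.one => true
  | _, _ => false

/-- The word-level function T(u,ϑ) = ⋀_{j<n} T(u_j, ϑ_j). -/
def Tword {n : ℕ} (u θ : Fin n → BB) : Bool :=
  decide (∀ j, Tcell (u j) (θ j) = true)

/-- The alphabet 𝔹 = {0,1} ⊆ 𝔹•. -/
def Bcirc : Set BB := {BB.zero, BB.one}

/-- The alphabet 𝔹∗ = {0,1,∗} ⊆ 𝔹•. -/
def Bstar : Set BB := {BB.zero, BB.one, BB.star}

/-- The full alphabet 𝔹•. -/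
def Bdot : Set BB := Set.univ

/-- A family Φ of functions {0,…,q−1} → 𝔹 is n-cell implementable under
scenario (A,B) if there are mappings u : {0,…,q−1} → A^n and ϑ : Φ → B^n
with f(x) = T(u(x), ϑ(f)) for all f ∈ Φ and x. -/
def Implementable (A B : Set BB) (n q : ℕ) (Φ : Set (Fin q → Bool)) : Prop :=
  ∃ u : Fin q → Fin n → BB, ∃ θ : (Fin q → Bool) → Fin n → BB,
    (∀ x j, u x j ∈ A) ∧ (∀ f ∈ Φ, ∀ j, θ f j ∈ B) ∧
    (∀ f ∈ Φ, ∀ x, f x = Tword (u x) (θ f))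

/-- The family 𝓔_q = { x ↦ [x = t] : t ∈ [q⟩ }. -/
def Eset (q : ℕ) : Set (Fin q → Bool) :=
  { f | ∃ t : Fin q, f = fun x => decide (x = t) }

/-- The family 𝓝_q = { x ↦ [x ≠ t] : t ∈ [q⟩ }. -/
def Nset (q : ℕ) : Set (Fin q → Bool) :=
  { f | ∃ t : Fin q, f = fun x => decide (x ≠ t) }

/-- The family 𝓖_q = { x ↦ [x ≥ t] : t ∈ [q⟩ }. -/
def Gset (q : ℕ) : Set (Fin q → Bool) :=
  { f | ∃ t : Fin q, f = fun x => decide (t ≤ x) }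

/-- The family 𝓛_q = { x ↦ [x ≤ t] : t ∈ [q⟩ }. -/
def Lset (q : ℕ) : Set (Fin q → Bool) :=
  { f | ∃ t : Fin q, f = fun x => decide (x ≤ t) }

/-!
Since the ϑ-word of `f` determines `f`, at most `4 ^ n = 2 ^ (2 * n)` functions can be
implemented, so `q ≤ 2 * n`. Conversely one cell serves two inputs: write input `x` as a bit into
its own cell, with `∗` in all other cells; in that cell the four ϑ-symbols `•, 1, 0, ∗` realise
the four possible pairs of answers to the bits `0` and `1`.
-/

def cellCode (g : Bool → Bool) : BB :=
  match g false, g true with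
  | true, true => BB.star
  | true, false => BB.zero
  | false, true => BB.one
  | false, false => BB.reject

def bitBB : Bool → BB
  | false => BB.zero
  | true => BB.one

lemma bitBB_mem_Bstar (b : Bool) : bitBB b ∈ Bstar := by
  cases b <;> simp [bitBB, Bstar]

lemma Tcell_bitBB_cellCode (g : Bool → Bool) (b : Bool) : Tcell (bitBB b) (cellCode g) = g b := by
  unfold cellCode
  cases b <;> cases g false <;> cases g true <;> rfl

lemma Tcell_star_left (v : BB) : Tcell BB.star v = true := by
  cases v <;> rfl

lemma Tword_update_star {n : ℕ} (j : Fin n) (a : BB) (θ : Fin n → BB) :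
    Tword (Function.update (fun _ => BB.star) j a) θ = Tcell a (θ j) := by
  have hcells : ∀ i, Tcell (Function.update (fun _ => BB.star) j a i) (θ i) = true ↔
      (i = j → Tcell a (θ i) = true) := by
    intro i
    by_cases hij : i = j
    · subst hij; simp
    · simp [hij, Tcell_star_left]
  simp only [Tword, hcells, forall_eq, Bool.decide_eq_true]

lemma Implementable.mono {A A' B B' : Set BB} {n q : ℕ} {Φ : Set (Fin q → Bool)}
    (h : Implementable A B n q Φ) (hA : A ⊆ A') (hB : B ⊆ B') : Implementable A' B' n q Φ := by
  obtain ⟨u, θ, hu, hθ, hT⟩ := h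
  exact ⟨u, θ, fun x j => hA (hu x j), fun f hf j => hB (hθ f hf j), hT⟩

theorem implementable_Bstar_Bdot_of_embedding {n q : ℕ} (e : Fin q ↪ Fin n × Bool)
    (Φ : Set (Fin q → Bool)) : Implementable Bstar Bdot n q Φ := by
  refine ⟨fun x => Function.update (fun _ => BB.star) (e x).1 (bitBB (e x).2),
    fun f j => cellCode fun b => Function.extend e f (fun _ => true) (j, b), ?_, ?_, ?_⟩
  · intro x j
    by_cases hj : j = (e x).1
    · subst hj; simpa using bitBB_mem_Bstar _
    · simp [Function.update_of_ne hj, Bstar]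
  · intro _ _ _
    trivial
  · intro f _ x
    rw [Tword_update_star, Tcell_bitBB_cellCode, e.injective.extend_apply]

theorem Implementable.le_two_mul {A B : Set BB} {n q : ℕ}
    (h : Implementable A B n q Set.univ) : q ≤ 2 * n := by
  obtain ⟨u, θ, -, -, hT⟩ := h
  have hsurj : Function.Surjective fun (v : Fin n → BB) (x : Fin q) => Tword (u x) v :=
    fun f => ⟨θ f, funext fun x => (hT f trivial x).symm⟩
  have hBB : Fintype.card BB = 2 ^ 2 := rfl
  have hcard : 2 ^ q ≤ 2 ^ (2 * n) := by
    calc 2 ^ q = Fintype.card (Fin q → Bool) := by simp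
      _ ≤ Fintype.card (Fin n → BB) := Fintype.card_le_of_surjective _ hsurj
      _ = 2 ^ (2 * n) := by simp [hBB, pow_mul]
  exact (Nat.pow_le_pow_iff_right (by norm_num)).mp hcard

theorem implementable_Bstar_Bdot_univ_of_le {n q : ℕ} (h : q ≤ 2 * n) :
    Implementable Bstar Bdot n q Set.univ := by
  have hcard : Fintype.card (Fin q) ≤ Fintype.card (Fin n × Bool) := by simpa [mul_comm] using h
  obtain ⟨e⟩ := Function.Embedding.nonempty_of_card_le hcard
  exact implementable_Bstar_Bdot_of_embedding e _

theorem Fset_implementable_starReject_rejectReject_general (q n : ℕ) :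
    (Implementable Bstar Bdot n q Set.univ ↔ q ≤ 2 * n) ∧
    (Implementable Bdot Bdot n q Set.univ ↔ q ≤ 2 * n) := by
  refine ⟨⟨Implementable.le_two_mul, implementable_Bstar_Bdot_univ_of_le⟩,
    ⟨Implementable.le_two_mul, fun h => ?_⟩⟩
  exact (implementable_Bstar_Bdot_univ_of_le h).mono (Set.subset_univ _) subset_rfl

theorem Fset_implementable_starReject_rejectReject (q n : ℕ)
    (hq : 2 ≤ q) (hn : 1 ≤ n) :
    (Implementable Bstar Bdot n q Set.univ ↔ q ≤ 2 * n) ∧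
    (Implementable Bdot Bdot n q Set.univ ↔ q ≤ 2 * n) :=
  Fset_implementable_starReject_rejectReject_general q n
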